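/- Let n ≥ 2 and let G_n be the simple graph on vertex set {1,…,n−1} in which distinct vertices i and j are adjacent iff i+j ≥ n. Then the number of unordered pairs of distinct non-adjacent vertices of G_n (equivalently, the number of unordered pairs {i,j} with i ≠ j and i+j < n) equals ⌊(n−2)²/4⌋. -/

import Mathlib

/-- The compressed zero divisor graph of `ℤ_{p^n}`: the simple graph on the
vertex set `{1, …, n-1}` (modelled by `Fin (n-1)`, where `i : Fin (n-1)`
represents the vertex `i+1`) in which distinct vertices `i` and `j` are
adjacent iff `i + j ≥ n`. -/
def compressedZdGraph (n : ℕ) : SimpleGraph (Fin (n - 1)) where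
  Adj i j := i ≠ j ∧ n ≤ (i : ℕ) + 1 + ((j : ℕ) + 1)
  symm := ⟨by intro i j h; exact ⟨h.1.symm, by omega⟩⟩
  loopless := ⟨by intro i h; exact h.1 rfl⟩

instance (n : ℕ) : DecidableRel (compressedZdGraph n).Adj :=
  fun i j => inferInstanceAs (Decidable (i ≠ j ∧ n ≤ (i : ℕ) + 1 + ((j : ℕ) + 1)))

/-!
Shifting the vertices down by one, the non-adjacent pairs become the pairs `a < b` of naturals
with `a + b < n - 2`. Grouped by their sum `m`, each `m` contributes `⌈m/2⌉` pairs, and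
`∑_{m<k} ⌈m/2⌉ = ⌊k²/4⌋`.
-/

open Finset

lemma card_filter_fst_lt_snd_antidiagonal (m : ℕ) :
    #{p ∈ antidiagonal m | p.1 < p.2} = (m + 1) / 2 := by
  rw [Nat.antidiagonal_eq_map, filter_map, card_map]
  convert card_range ((m + 1) / 2) using 2
  ext i
  simp only [mem_filter, mem_range, Function.comp_apply]
  change i < m + 1 ∧ i < m - i ↔ _
  omega

lemma sum_range_add_one_div_two (k : ℕ) : ∑ m ∈ range k, (m + 1) / 2 = k ^ 2 / 4 := by
  induction k with
  | zero => rfl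
  | succ k ih =>
    rw [sum_range_succ, ih]
    rcases Nat.even_or_odd' k with ⟨m, rfl | rfl⟩ <;> ring_nf <;> omega

lemma card_filter_lt_and_add_lt {k N : ℕ} (hk : k ≤ N) :
    #{p ∈ range N ×ˢ range N | p.1 < p.2 ∧ p.1 + p.2 < k} = k ^ 2 / 4 := by
  rw [card_eq_sum_card_fiberwise (f := fun p => p.1 + p.2) (t := range k)
    fun _ hp => mem_range.2 (mem_filter.1 (mem_coe.1 hp)).2.2,
    ← sum_range_add_one_div_two]
  refine sum_congr rfl fun m hm => ?_
  rw [← card_filter_fst_lt_snd_antidiagonal]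
  congr 1
  ext ⟨a, b⟩
  simp only [mem_range] at hm
  simp only [mem_filter, mem_product, mem_range, HasAntidiagonal.mem_antidiagonal]
  omega

lemma card_filter_fin_prod_eq_card_filter_range_prod (m : ℕ) (Q : ℕ → ℕ → Prop)
    [DecidableRel Q] :
    #{p : Fin m × Fin m | Q p.1 p.2} = #{p ∈ range m ×ˢ range m | Q p.1 p.2} := by
  rw [← Nat.Iio_eq_range, ← Fin.map_valEmbedding_univ, ← prodMap_map_product, univ_product_univ,
    filter_map, card_map]
  rfl

lemma compressedZdGraph_not_adj_iff {n : ℕ} {i j : Fin (n - 1)} (h : i < j) :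
    ¬ (compressedZdGraph n).Adj i j ↔ (i : ℕ) + j < n - 2 := by
  simp only [compressedZdGraph, ne_eq, h.ne, not_false_eq_true, true_and, not_le]
  omega

theorem card_nonadjacent_pairs_general (n : ℕ) :
    (Finset.univ.filter (fun p : Fin (n - 1) × Fin (n - 1) =>
        p.1 < p.2 ∧ ¬ (compressedZdGraph n).Adj p.1 p.2)).card = (n - 2) ^ 2 / 4 :=
  calc _ = #{p : Fin (n - 1) × Fin (n - 1) | (p.1 : ℕ) < p.2 ∧ (p.1 : ℕ) + p.2 < n - 2} :=
        congrArg card <| filter_congr fun _ _ => and_congr_right compressedZdGraph_not_adj_iff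
    _ = #{p ∈ range (n - 1) ×ˢ range (n - 1) | p.1 < p.2 ∧ p.1 + p.2 < n - 2} :=
        card_filter_fin_prod_eq_card_filter_range_prod (n - 1) (fun a b => a < b ∧ a + b < n - 2)
    _ = (n - 2) ^ 2 / 4 := card_filter_lt_and_add_lt (by omega)

/-- The number of unordered pairs of distinct non-adjacent vertices of the
compressed zero divisor graph, i.e. pairs `{i, j}` with `i ≠ j` and `i + j < n`,
equals `⌊(n-2)²/4⌋`. -/
theorem card_nonadjacent_pairs (n : ℕ) (hn : 2 ≤ n) :
    (Finset.univ.filter (fun p : Fin (n - 1) × Fin (n - 1) =>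
        p.1 < p.2 ∧ ¬ (compressedZdGraph n).Adj p.1 p.2)).card = (n - 2) ^ 2 / 4 :=
  card_nonadjacent_pairs_general n
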